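/- arXiv:1111.5598 — 5 statements merged into one kernel-verified Lean document; each statement's English description precedes it below -/
import Mathlib

section
/- If a simple graph G on n vertices admits a partition of its vertex set into r δ-sets, then the sum of squares of the degrees satisfies Σᵥ deg(v)² ≤ n·σ₂(n₁,…,n_r) + 3·σ₃(n₁,…,n_r), where n₁,…,n_r are the sizes of the parts. -/
open Finset

/-- A δ-set in a graph: every vertex in the set has degree at most `n - |S|`. -/
def IsDeltaSet {V : Type*} [Fintype V] (G : SimpleGraph V) [DecidableRel G.Adj]
    (S : Finset V) : Prop :=
  ∀ v ∈ S, G.degree v ≤ Fintype.card V - S.card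

/-- The generalized chromatic number: the least `r` such that the vertex set
partitions into `r` δ-sets. -/
noncomputable def genChrom {V : Type*} [Fintype V] [DecidableEq V]
    (G : SimpleGraph V) [DecidableRel G.Adj] : ℕ :=
  sInf {r | ∃ f : V → Fin r, ∀ i, IsDeltaSet G (Finset.univ.filter fun v => f v = i)}

/-- Quadratic mean of the degree sequence. -/
noncomputable def qmDeg {V : Type*} [Fintype V] (G : SimpleGraph V) [DecidableRel G.Adj] : ℝ :=
  Real.sqrt ((∑ v, (G.degree v : ℝ) ^ 2) / Fintype.card V)

/-- `k`-th elementary symmetric polynomial of `x : Fin r → ℝ`. -/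
def esym {r : ℕ} (k : ℕ) (x : Fin r → ℝ) : ℝ :=
  ∑ t ∈ Finset.univ.powersetCard k, ∏ i ∈ t, x i

/-! A vertex in a part of size `nᵢ` has degree at most `n - nᵢ`, so `∑ deg² ≤ ∑ nᵢ (n - nᵢ)²`.
Since `n = ∑ nᵢ`, Newton's identities for `σ₂` and `σ₃` rewrite the right-hand side as
`n σ₂ + 3 σ₃`. -/

namespace MvPolynomial

variable (σ R : Type*) [Fintype σ] [CommRing R]

/-- Newton's identities for `k = 2, 3` eliminate the power sums, leaving an identity with
integer coefficients. -/
theorem sum_X_mul_sum_X_sub_X_sq :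
    ∑ i, X i * (∑ j, X j - X i) ^ 2 = (∑ i, X i) * esymm σ R 2 + 3 * esymm σ R 3 := by
  have newton₂ := mul_esymm_eq_sum σ R 2
  have newton₃ := mul_esymm_eq_sum σ R 3
  simp only [sum_filter, Nat.sum_antidiagonal_eq_sum_range_succ_mk, sum_range_succ, psum,
    esymm_one, esymm_zero] at newton₂ newton₃
  norm_num at newton₂ newton₃
  have expand : ∑ i, X i * (∑ j, X j - X i) ^ 2 =
      (∑ i, X i) ^ 2 * ∑ i, X i - 2 * (∑ i, X i) * ∑ i, X i ^ 2 +
        ∑ i, (X i : MvPolynomial σ R) ^ 3 := by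
    rw [mul_sum, mul_sum, ← sum_sub_distrib, ← sum_add_distrib]
    exact sum_congr rfl fun i _ => by ring
  rw [expand]
  linear_combination -(∑ i, (X i : MvPolynomial σ R)) * newton₂ - newton₃

end MvPolynomial

theorem esym_eq_eval_esymm {r : ℕ} (k : ℕ) (x : Fin r → ℝ) :
    esym k x = MvPolynomial.eval x (MvPolynomial.esymm (Fin r) ℝ k) := by
  simp [esym, MvPolynomial.esymm, map_sum, map_prod]

theorem sum_mul_sum_sub_sq_eq_esym {r : ℕ} (x : Fin r → ℝ) :
    ∑ i, x i * (∑ j, x j - x i) ^ 2 = (∑ i, x i) * esym 2 x + 3 * esym 3 x := by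
  simpa [esym_eq_eval_esymm] using
    congrArg (MvPolynomial.eval x) (MvPolynomial.sum_X_mul_sum_X_sub_X_sq (Fin r) ℝ)

theorem IsDeltaSet.sum_degree_sq_le {V : Type*} [Fintype V] {G : SimpleGraph V}
    [DecidableRel G.Adj] {S : Finset V} (hS : IsDeltaSet G S) :
    ∑ v ∈ S, G.degree v ^ 2 ≤ #S * (Fintype.card V - #S) ^ 2 := by
  simpa using sum_le_card_nsmul S _ _ fun v hv => Nat.pow_le_pow_left (hS v hv) 2

theorem sum_degree_sq_le_of_isDeltaSet_fibers {V ι : Type*} [Fintype V] [Fintype ι]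
    [DecidableEq ι] (G : SimpleGraph V) [DecidableRel G.Adj] (f : V → ι)
    (hδ : ∀ i, IsDeltaSet G {v | f v = i}) :
    ∑ v, G.degree v ^ 2 ≤
      ∑ i, #{v | f v = i} * (Fintype.card V - #{v | f v = i}) ^ 2 := by
  rw [← sum_fiberwise univ f]
  exact sum_le_sum fun i _ => (hδ i).sum_degree_sq_le

theorem stmt3_general {V : Type*} [Fintype V] (G : SimpleGraph V) [DecidableRel G.Adj]
    (r : ℕ) (f : V → Fin r)
    (hδ : ∀ i, IsDeltaSet G (Finset.univ.filter fun v => f v = i)) :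
    (∑ v, (G.degree v : ℝ) ^ 2) ≤
      (Fintype.card V : ℝ) *
        esym 2 (fun i => ((Finset.univ.filter fun v => f v = i).card : ℝ)) +
      3 * esym 3 (fun i => ((Finset.univ.filter fun v => f v = i).card : ℝ)) := by
  set part : Fin r → ℕ := fun i => #{v | f v = i}
  have part_le (i : Fin r) : part i ≤ Fintype.card V := card_le_univ _
  have sum_part : ∑ i, part i = Fintype.card V := (card_eq_sum_card_fiberwise (by simp)).symm
  calc (∑ v, (G.degree v : ℝ) ^ 2)
      ≤ ∑ i, (part i : ℝ) * (Fintype.card V - part i : ℕ) ^ 2 := by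
        exact_mod_cast sum_degree_sq_le_of_isDeltaSet_fibers G f hδ
    _ = ∑ i, (part i : ℝ) * (∑ j, (part j : ℝ) - part i) ^ 2 := by
        rw [← Nat.cast_sum, sum_part]
        exact sum_congr rfl fun i _ => by rw [Nat.cast_sub (part_le i)]
    _ = _ := by
        rw [sum_mul_sum_sub_sq_eq_esym, ← Nat.cast_sum, sum_part]

theorem stmt3 {V : Type*} [Fintype V] [DecidableEq V] (G : SimpleGraph V) [DecidableRel G.Adj]
    (r : ℕ) (f : V → Fin r)
    (hδ : ∀ i, IsDeltaSet G (Finset.univ.filter fun v => f v = i)) :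
    (∑ v, (G.degree v : ℝ) ^ 2) ≤
      (Fintype.card V : ℝ) *
        esym 2 (fun i => ((Finset.univ.filter fun v => f v = i).card : ℝ)) +
      3 * esym 3 (fun i => ((Finset.univ.filter fun v => f v = i).card : ℝ)) :=
  stmt3_general G r f hδ
end

section
/- If a simple graph G on n vertices with degree sequence d₁,…,d_n admits a partition of its vertices into r δ-sets, then Σᵢ dᵢ² ≤ n³(1 - 1/r)². Equivalently, r ≥ n/(n - \bar{\bar d}) where \bar{\bar d} = sqrt((Σᵢ dᵢ²)/n). -/
open Finset

lemma tangent_aux (N R x : ℝ) (hN : 0 ≤ N) (hR : 2 ≤ R) (hxN : x ≤ N) :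
    R^3 * (x * (N - x)^2) ≤ N^2*R*(R-1)*(R-3)*x + 2*N^3*(R-1) := by
  nlinarith [sq_nonneg (R*x - N),
    mul_nonneg (sq_nonneg (R*x-N)) (show (0:ℝ) ≤ 2*N*(R-1) - R*x by nlinarith)]

theorem stmt6 {V : Type*} [Fintype V] [DecidableEq V] (G : SimpleGraph V) [DecidableRel G.Adj]
    (hn : 0 < Fintype.card V) (r : ℕ) (hr : 0 < r) (f : V → Fin r)
    (hδ : ∀ i, IsDeltaSet G (Finset.univ.filter fun v => f v = i)) :
    (∑ v, (G.degree v : ℝ) ^ 2) ≤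
        (Fintype.card V : ℝ) ^ 3 * (r - 1) ^ 2 / r ^ 2 ∧
      (r : ℝ) ≥ (Fintype.card V : ℝ) / ((Fintype.card V : ℝ) - qmDeg G) := by
  classical
  set n := Fintype.card V with hndef
  set N : ℝ := (n : ℝ) with hNdef
  set R : ℝ := (r : ℝ) with hRdef
  have hN0 : (0:ℝ) < N := by rw [hNdef]; exact_mod_cast hn
  have hR0 : (0:ℝ) < R := by rw [hRdef]; exact_mod_cast hr
  have hR1 : (1:ℝ) ≤ R := by rw [hRdef]; exact_mod_cast hr
  set S : Fin r → Finset V := fun i => Finset.univ.filter fun v => f v = i with hS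
  have hcard : ∀ i, (S i).card ≤ n := fun i => (Finset.card_filter_le _ _).trans_eq (by
    simp [hndef, Finset.card_univ])
  have hcardR : ∀ i, ((S i).card : ℝ) ≤ N := by
    intro i; rw [hNdef]; exact_mod_cast hcard i
  have hsum_card : ∑ i, ((S i).card : ℝ) = N := by
    have h := Finset.card_eq_sum_card_fiberwise (f := f) (s := (Finset.univ : Finset V))
      (t := Finset.univ) (fun v _ => Finset.mem_univ (f v))
    rw [hNdef, hndef, ← Finset.card_univ, h]
    push_cast
    rfl
  have hsplit : (∑ v, (G.degree v : ℝ) ^ 2)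
      = ∑ i, ∑ v ∈ S i, (G.degree v : ℝ) ^ 2 := by
    rw [hS]
    exact (Finset.sum_fiberwise_of_maps_to (fun v _ => Finset.mem_univ (f v)) _).symm
  have hclass : ∀ i, ∑ v ∈ S i, (G.degree v : ℝ) ^ 2
      ≤ ((S i).card : ℝ) * (N - (S i).card) ^ 2 := by
    intro i
    have hle : ∀ v ∈ S i, (G.degree v : ℝ) ^ 2 ≤ (N - (S i).card) ^ 2 := by
      intro v hv
      have h1 : G.degree v ≤ n - (S i).card := hδ i v hv
      have h2 : (G.degree v : ℝ) ≤ N - (S i).card := by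
        have h3 : ((n - (S i).card : ℕ) : ℝ) = N - (S i).card := by
          rw [Nat.cast_sub (hcard i), hNdef]
        calc (G.degree v : ℝ) ≤ ((n - (S i).card : ℕ) : ℝ) := by exact_mod_cast h1
          _ = N - (S i).card := h3
      exact pow_le_pow_left₀ (by positivity) h2 2
    calc ∑ v ∈ S i, (G.degree v : ℝ) ^ 2 ≤ ∑ _v ∈ S i, (N - (S i).card) ^ 2 :=
          Finset.sum_le_sum hle
      _ = ((S i).card : ℝ) * (N - (S i).card) ^ 2 := by
          rw [Finset.sum_const, nsmul_eq_mul]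
  have key : (∑ v, (G.degree v : ℝ) ^ 2) ≤ N ^ 3 * (R - 1) ^ 2 / R ^ 2 := by
    rcases eq_or_lt_of_le (Nat.succ_le_of_lt hr) with h1 | h2
    · -- r = 1 : every degree is 0
      have hr1 : r = 1 := h1.symm
      subst hr1
      have hzero : ∀ v : V, G.degree v = 0 := by
        intro v
        have h := hδ (f v) v (by simp)
        have huniv : (Finset.univ.filter fun w => f w = f v) = Finset.univ := by
          ext w; simpa using Subsingleton.elim (f w) (f v)
        rw [huniv, Finset.card_univ, ← hndef] at h
        omega
      have hRone : R = 1 := by rw [hRdef]; norm_num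
      rw [hRone]
      simp [hzero]
    · -- r ≥ 2
      have hR2 : (2:ℝ) ≤ R := by rw [hRdef]; exact_mod_cast h2
      have hsum3 : R^3 * (∑ i, ((S i).card : ℝ) * (N - (S i).card) ^ 2)
          ≤ N^3 * R * (R-1)^2 := by
        rw [Finset.mul_sum]
        calc ∑ i, R^3 * (((S i).card : ℝ) * (N - (S i).card) ^ 2)
            ≤ ∑ i, (N^2*R*(R-1)*(R-3) * ((S i).card : ℝ) + 2*N^3*(R-1)) := by
              refine Finset.sum_le_sum fun i _ => ?_
              exact tangent_aux N R _ hN0.le hR2 (hcardR i)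
          _ = N^2*R*(R-1)*(R-3) * (∑ i, ((S i).card : ℝ)) + (r:ℝ) * (2*N^3*(R-1)) := by
              rw [Finset.sum_add_distrib, ← Finset.mul_sum, Finset.sum_const]
              simp [nsmul_eq_mul]
          _ = N^3 * R * (R-1)^2 := by rw [hsum_card, ← hRdef]; ring
      have hstep : (∑ v, (G.degree v : ℝ) ^ 2)
          ≤ ∑ i, ((S i).card : ℝ) * (N - (S i).card) ^ 2 := by
        rw [hsplit]; exact Finset.sum_le_sum fun i _ => hclass i
      have h4 : R^3 * (∑ v, (G.degree v : ℝ) ^ 2) ≤ N^3 * R * (R-1)^2 :=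
        le_trans (mul_le_mul_of_nonneg_left hstep (by positivity)) hsum3
      rw [le_div_iff₀ (by positivity : (0:ℝ) < R^2)]
      nlinarith [h4, hR0]
  refine ⟨key, ?_⟩
  have hq0 : 0 ≤ qmDeg G := Real.sqrt_nonneg _
  have hbound0 : (0:ℝ) ≤ N * (R - 1) / R := by
    apply div_nonneg _ hR0.le
    nlinarith
  have hqle : qmDeg G ≤ N * (R - 1) / R := by
    have h1 : (∑ v, (G.degree v : ℝ) ^ 2) / N ≤ (N * (R-1) / R)^2 := by
      rw [div_le_iff₀ hN0]
      calc (∑ v, (G.degree v : ℝ) ^ 2) ≤ N ^ 3 * (R - 1) ^ 2 / R ^ 2 := key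
        _ = (N * (R-1) / R)^2 * N := by field_simp
    have h2 : qmDeg G ≤ Real.sqrt ((N * (R-1) / R)^2) := by
      unfold qmDeg
      exact Real.sqrt_le_sqrt h1
    rwa [Real.sqrt_sq hbound0] at h2
  have hNR : N - N * (R-1)/R = N / R := by field_simp; ring
  have hNq : N / R ≤ N - qmDeg G := by
    rw [← hNR]; linarith
  have hpos : 0 < N - qmDeg G := lt_of_lt_of_le (div_pos hN0 hR0) hNq
  rw [ge_iff_le, div_le_iff₀ hpos]
  calc N = R * (N / R) := by rw [mul_div_cancel₀ _ hR0.ne']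
    _ ≤ R * (N - qmDeg G) := mul_le_mul_of_nonneg_left hNq hR0.le
end

section
/- Main theorem: For every simple graph G on n vertices, φ(G) ≥ n/(n − \bar{\bar d}(G)), where \bar{\bar d}(G) is the quadratic mean of the degrees. Equality holds if and only if φ(G) divides n and G is regular of degree n(φ(G)−1)/φ(G). -/
open Finset

/-! Let `f` split the vertices into `r` δ-sets of sizes `x₁, …, x_r`, so `∑ xᵢ = n`. A vertex in the
`i`-th class has degree at most `n - xᵢ`, hence `∑ d(v)² ≤ ∑ᵢ xᵢ (n - xᵢ)²`. The cubic
`t ↦ t (n - t)²` lies below its tangent line at `c = n / r` on `t ≤ n` once `r ≥ 2`, and summing the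
tangent line over the classes gives `n (n - n / r)²`. So the quadratic mean of the degrees is at most
`n - n / r`, which for `r = φ(G)` is the inequality. Equality forces every class to have exactly
`n / r` vertices and every vertex to have degree exactly `n - n / r`. -/

section TangentLine

variable {ι : Type*} [Fintype ι] {x : ι → ℝ} {n : ℝ}

-- The gap between the tangent line at `c` and the cubic is `(t - c)² (2n - 2c - t)`.
lemma mul_sub_sq_le_tangent {c t : ℝ} (ht : t ≤ n) (hc : 2 * c ≤ n) :
    t * (n - t) ^ 2 ≤ c * (n - c) ^ 2 + (n - c) * (n - 3 * c) * (t - c) := by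
  nlinarith [mul_nonneg (sq_nonneg (t - c)) (by linarith : 0 ≤ 2 * n - 2 * c - t)]

lemma le_of_mul_sub_sq_eq_tangent {c t : ℝ} (hc₀ : 0 ≤ c) (hc : 2 * c ≤ n)
    (h : t * (n - t) ^ 2 = c * (n - c) ^ 2 + (n - c) * (n - 3 * c) * (t - c)) : c ≤ t := by
  have hfac : (t - c) ^ 2 * (2 * n - 2 * c - t) = 0 := by linear_combination -h
  rcases mul_eq_zero.1 hfac with h | h
  · linarith [pow_eq_zero_iff two_ne_zero |>.1 h]
  · linarith

lemma two_mul_div_card_le [Nontrivial ι] (hn : 0 ≤ n) : 2 * (n / Fintype.card ι) ≤ n := by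
  have h2 : (2 : ℝ) ≤ Fintype.card ι := by exact_mod_cast Fintype.one_lt_card
  rw [mul_div_assoc', div_le_iff₀ (by linarith)]
  nlinarith

lemma sum_tangent_eq (hx : ∑ i, x i = n) {c : ℝ} (hc : Fintype.card ι * c = n) :
    ∑ i, (c * (n - c) ^ 2 + (n - c) * (n - 3 * c) * (x i - c)) = n * (n - c) ^ 2 := by
  simp only [sum_add_distrib, ← mul_sum, sum_sub_distrib, hx, sum_const, card_univ, nsmul_eq_mul]
  linear_combination ((n - c) ^ 2 - (n - c) * (n - 3 * c)) * hc

lemma mul_sub_sq_le_tangent_div_card [Nontrivial ι] (hx₀ : ∀ i, 0 ≤ x i) (hx : ∑ i, x i = n)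
    (i : ι) : x i * (n - x i) ^ 2 ≤ n / Fintype.card ι * (n - n / Fintype.card ι) ^ 2 +
      (n - n / Fintype.card ι) * (n - 3 * (n / Fintype.card ι)) * (x i - n / Fintype.card ι) :=
  mul_sub_sq_le_tangent (hx ▸ single_le_sum (fun j _ => hx₀ j) (mem_univ i))
    (two_mul_div_card_le (hx ▸ sum_nonneg fun j _ => hx₀ j))

lemma sum_mul_sub_sq_le (hx₀ : ∀ i, 0 ≤ x i) (hx : ∑ i, x i = n) :
    ∑ i, x i * (n - x i) ^ 2 ≤ n * (n - n / Fintype.card ι) ^ 2 := by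
  rcases subsingleton_or_nontrivial ι with hι | hι
  · have hxn (i : ι) : x i = n := by rw [← hx, Fintype.sum_subsingleton _ i]
    have hn : 0 ≤ n := hx ▸ sum_nonneg fun j _ => hx₀ j
    simp only [hxn, sub_self, zero_pow two_ne_zero, mul_zero, sum_const_zero]
    positivity
  · rw [← sum_tangent_eq hx (mul_div_cancel₀ n (by positivity))]
    exact sum_le_sum fun i _ => mul_sub_sq_le_tangent_div_card hx₀ hx i

lemma eq_div_card_of_sum_mul_sub_sq_eq (hx₀ : ∀ i, 0 ≤ x i) (hx : ∑ i, x i = n)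
    (h : ∑ i, x i * (n - x i) ^ 2 = n * (n - n / Fintype.card ι) ^ 2) (i : ι) :
    x i = n / Fintype.card ι := by
  rcases subsingleton_or_nontrivial ι with hι | hι
  · rw [Fintype.card_eq_one_iff.2 ⟨i, fun j => Subsingleton.elim j i⟩, Nat.cast_one, div_one, ← hx,
      Fintype.sum_subsingleton _ i]
  · set c := n / Fintype.card ι
    have hn : 0 ≤ n := hx ▸ sum_nonneg fun j _ => hx₀ j
    have hc : Fintype.card ι * c = n := mul_div_cancel₀ n (by positivity)
    rw [← sum_tangent_eq hx hc,
      sum_eq_sum_iff_of_le fun j _ => mul_sub_sq_le_tangent_div_card hx₀ hx j] at h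
    have hge (j : ι) : c ≤ x j :=
      le_of_mul_sub_sq_eq_tangent (by positivity) (two_mul_div_card_le hn) (h j (mem_univ j))
    have hsum : ∑ j, (x j - c) = 0 := by
      rw [sum_sub_distrib, hx, sum_const, card_univ, nsmul_eq_mul, hc, sub_self]
    linarith [(sum_eq_zero_iff_of_nonneg fun j _ => sub_nonneg.2 (hge j)).1 hsum i (mem_univ i)]

end TangentLine

section DeltaPartition

variable {V : Type*} [Fintype V] {G : SimpleGraph V} [DecidableRel G.Adj]
  {ι : Type*} [DecidableEq ι] {f : V → ι}

lemma degree_le_card_sub_card_fiber (hf : ∀ i, IsDeltaSet G {v | f v = i}) (v : V) :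
    (G.degree v : ℝ) ≤ Fintype.card V - #{w | f w = f v} := by
  have hv := hf (f v) v (by simp)
  rw [le_sub_iff_add_le]
  exact_mod_cast (Nat.le_sub_iff_add_le (card_le_univ _)).1 hv

variable [Fintype ι]

lemma sum_card_fiber : ∑ i, (#{v | f v = i} : ℝ) = Fintype.card V := by
  exact_mod_cast (card_eq_sum_card_fiberwise fun v _ => mem_univ (f v)).symm

lemma sum_card_sub_card_fiber_sq :
    ∑ v, ((Fintype.card V : ℝ) - #{w | f w = f v}) ^ 2 =
      ∑ i, (#{v | f v = i} : ℝ) * (Fintype.card V - #{v | f v = i}) ^ 2 := by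
  rw [← sum_fiberwise univ f]
  refine sum_congr rfl fun i _ => ?_
  rw [sum_congr rfl fun v hv => by rw [(mem_filter.1 hv).2], sum_const, nsmul_eq_mul]

lemma sum_degree_sq_le_of_isDeltaSet (hf : ∀ i, IsDeltaSet G {v | f v = i}) :
    ∑ v, (G.degree v : ℝ) ^ 2 ≤
      Fintype.card V * (Fintype.card V - Fintype.card V / Fintype.card ι) ^ 2 :=
  calc ∑ v, (G.degree v : ℝ) ^ 2 ≤ ∑ v, ((Fintype.card V : ℝ) - #{w | f w = f v}) ^ 2 :=
        sum_le_sum fun v _ =>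
          pow_le_pow_left₀ (Nat.cast_nonneg _) (degree_le_card_sub_card_fiber hf v) 2
    _ = ∑ i, (#{v | f v = i} : ℝ) * (Fintype.card V - #{v | f v = i}) ^ 2 :=
        sum_card_sub_card_fiber_sq
    _ ≤ _ := sum_mul_sub_sq_le (fun _ => Nat.cast_nonneg _) sum_card_fiber

lemma card_fiber_eq_and_degree_eq_of_sum_degree_sq_eq (hf : ∀ i, IsDeltaSet G {v | f v = i})
    (h : ∑ v, (G.degree v : ℝ) ^ 2 =
      Fintype.card V * (Fintype.card V - Fintype.card V / Fintype.card ι) ^ 2) :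
    (∀ i, (#{v | f v = i} : ℝ) = Fintype.card V / Fintype.card ι) ∧
      ∀ v, (G.degree v : ℝ) = Fintype.card V - Fintype.card V / Fintype.card ι := by
  have hdeg := degree_le_card_sub_card_fiber hf
  have hsq (v : V) : (G.degree v : ℝ) ^ 2 ≤ (Fintype.card V - #{w | f w = f v}) ^ 2 :=
    pow_le_pow_left₀ (Nat.cast_nonneg _) (hdeg v) 2
  have hle := sum_mul_sub_sq_le (fun _ => Nat.cast_nonneg _) (sum_card_fiber (f := f))
  rw [← sum_card_sub_card_fiber_sq] at hle
  have hdeg_sum := le_antisymm (sum_le_sum fun v _ => hsq v) (hle.trans h.ge)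
  have hfiber_sum : ∑ i, (#{v | f v = i} : ℝ) * (Fintype.card V - #{v | f v = i}) ^ 2 =
      Fintype.card V * (Fintype.card V - Fintype.card V / Fintype.card ι) ^ 2 := by
    rw [← sum_card_sub_card_fiber_sq, ← hdeg_sum, h]
  have hfiber := eq_div_card_of_sum_mul_sub_sq_eq (fun _ => Nat.cast_nonneg _) sum_card_fiber
    hfiber_sum
  refine ⟨hfiber, fun v => ?_⟩
  rw [sum_eq_sum_iff_of_le fun v _ => hsq v] at hdeg_sum
  rw [← hfiber (f v)]
  exact (pow_left_inj₀ (Nat.cast_nonneg _) ((Nat.cast_nonneg _).trans (hdeg v)) two_ne_zero).1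
    (hdeg_sum v (mem_univ v))

end DeltaPartition

lemma Nat.cast_mul_sub_one_div_of_dvd {K : Type*} [Field K] [CharZero K] {n r : ℕ} (h : r ∣ n)
    (hr : 0 < r) : ((n * (r - 1) / r : ℕ) : K) = n - n / r := by
  have hr' : (r : K) ≠ 0 := Nat.cast_ne_zero.2 hr.ne'
  rw [Nat.cast_div (h.mul_right _) hr', Nat.cast_mul, Nat.cast_sub hr, Nat.cast_one]
  field_simp

section QuadraticMean

variable {V : Type*} [Fintype V] {G : SimpleGraph V} [DecidableRel G.Adj]

lemma qmDeg_le_iff (hV : 0 < Fintype.card V) {a : ℝ} (ha : 0 ≤ a) :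
    qmDeg G ≤ a ↔ ∑ v, (G.degree v : ℝ) ^ 2 ≤ Fintype.card V * a ^ 2 := by
  rw [qmDeg, Real.sqrt_le_left ha, div_le_iff₀ (by positivity), mul_comm]

lemma qmDeg_eq_iff (hV : 0 < Fintype.card V) {a : ℝ} (ha : 0 ≤ a) :
    qmDeg G = a ↔ ∑ v, (G.degree v : ℝ) ^ 2 = Fintype.card V * a ^ 2 := by
  rw [qmDeg, Real.sqrt_eq_iff_eq_sq (by positivity) ha, div_eq_iff (by positivity), mul_comm]

lemma qmDeg_of_isRegularOfDegree (hV : 0 < Fintype.card V) {k : ℕ} (h : G.IsRegularOfDegree k) :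
    qmDeg G = k := by
  rw [qmDeg_eq_iff hV k.cast_nonneg]
  simp only [h _, sum_const, card_univ, nsmul_eq_mul]

variable {ι : Type*} [Fintype ι] [DecidableEq ι] {f : V → ι}

lemma qmDeg_le_of_isDeltaSet (hV : 0 < Fintype.card V) (hf : ∀ i, IsDeltaSet G {v | f v = i}) :
    qmDeg G ≤ Fintype.card V - Fintype.card V / Fintype.card ι := by
  obtain ⟨v⟩ := Fintype.card_pos_iff.1 hV
  have hι : (1 : ℝ) ≤ Fintype.card ι := by exact_mod_cast Fintype.card_pos_iff.2 ⟨f v⟩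
  exact (qmDeg_le_iff hV (sub_nonneg.2 (div_le_self (Nat.cast_nonneg _) hι))).2
    (sum_degree_sq_le_of_isDeltaSet hf)

lemma card_fiber_eq_and_degree_eq_of_qmDeg_eq (hV : 0 < Fintype.card V)
    (hf : ∀ i, IsDeltaSet G {v | f v = i})
    (h : qmDeg G = Fintype.card V - Fintype.card V / Fintype.card ι) :
    (∀ i, (#{v | f v = i} : ℝ) = Fintype.card V / Fintype.card ι) ∧
      ∀ v, (G.degree v : ℝ) = Fintype.card V - Fintype.card V / Fintype.card ι :=
  card_fiber_eq_and_degree_eq_of_sum_degree_sq_eq hf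
    ((qmDeg_eq_iff hV (h ▸ Real.sqrt_nonneg _)).1 h)

end QuadraticMean

section GenChrom

variable {V : Type*} [Fintype V] (G : SimpleGraph V) [DecidableRel G.Adj]

lemma isDeltaSet_of_card_le_one {S : Finset V} (hS : #S ≤ 1) : IsDeltaSet G S := fun v hv => by
  have := G.degree_lt_card_verts v
  have := card_pos.2 ⟨v, hv⟩
  omega

lemma exists_isDeltaSet_partition_genChrom [DecidableEq V] :
    ∃ f : V → Fin (genChrom G), ∀ i, IsDeltaSet G {v | f v = i} := by
  have hne : {r | ∃ f : V → Fin r, ∀ i, IsDeltaSet G {v | f v = i}}.Nonempty :=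
    ⟨_, Fintype.equivFin V, fun _ => isDeltaSet_of_card_le_one G <|
      card_le_one.2 fun _ ha _ hb => (Fintype.equivFin V).injective <|
        (mem_filter.1 ha).2.trans (mem_filter.1 hb).2.symm⟩
  exact Nat.sInf_mem hne

end GenChrom

theorem stmt7 {V : Type*} [Fintype V] [DecidableEq V] (G : SimpleGraph V) [DecidableRel G.Adj]
    (hn : 0 < Fintype.card V) :
    (genChrom G : ℝ) ≥ (Fintype.card V : ℝ) / ((Fintype.card V : ℝ) - qmDeg G) ∧
    ((genChrom G : ℝ) = (Fintype.card V : ℝ) / ((Fintype.card V : ℝ) - qmDeg G) ↔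
      genChrom G ∣ Fintype.card V ∧
        G.IsRegularOfDegree (Fintype.card V * (genChrom G - 1) / genChrom G)) := by
  set n := Fintype.card V
  set r := genChrom G
  obtain ⟨f, hf⟩ := exists_isDeltaSet_partition_genChrom G
  obtain ⟨v₀⟩ := Fintype.card_pos_iff.1 hn
  have hr : 0 < r := Fin.pos (f v₀)
  have hr' : (0 : ℝ) < r := by exact_mod_cast hr
  have hq : qmDeg G ≤ n - n / r := by
    simpa only [Fintype.card_fin] using qmDeg_le_of_isDeltaSet hn hf
  have hgap : n / r ≤ (n : ℝ) - qmDeg G := by linarith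
  have hgap_pos : 0 < (n : ℝ) - qmDeg G :=
    (div_pos (by exact_mod_cast hn) hr').trans_le hgap
  have hr_eq : (r : ℝ) = n / (n - qmDeg G) ↔ qmDeg G = n - n / r := by
    rw [eq_div_iff hgap_pos.ne', eq_sub_iff_add_eq, ← eq_sub_iff_add_eq', div_eq_iff hr'.ne']
    constructor <;> intro h <;> linarith
  refine ⟨?_, hr_eq.trans ⟨fun h => ?_, fun ⟨hdvd, hreg⟩ => ?_⟩⟩
  · rw [ge_iff_le, div_le_iff₀ hgap_pos, mul_comm]
    exact (div_le_iff₀ hr').1 hgap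
  · obtain ⟨hfiber, hdeg⟩ := by
      simpa only [Fintype.card_fin] using card_fiber_eq_and_degree_eq_of_qmDeg_eq hn hf
        (by simpa only [Fintype.card_fin] using h)
    have hdvd : r ∣ n := by
      refine ⟨#{v | f v = f v₀}, ?_⟩
      have : (r : ℝ) * #{v | f v = f v₀} = n := by rw [hfiber, mul_div_cancel₀ _ hr'.ne']
      exact_mod_cast this.symm
    refine ⟨hdvd, fun v => ?_⟩
    exact_mod_cast (hdeg v).trans (Nat.cast_mul_sub_one_div_of_dvd hdvd hr).symm
  · rw [qmDeg_of_isRegularOfDegree hn hreg, Nat.cast_mul_sub_one_div_of_dvd hdvd hr]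
end

section
/- Converse direction of equality: If n ≡ 0 (mod r) where r = φ(G), and G is regular of degree n(r−1)/r, then φ(G) = n/(n − \bar{\bar d}(G)). -/
open Finset

theorem stmt9 {V : Type*} [Fintype V] [DecidableEq V] (G : SimpleGraph V) [DecidableRel G.Adj]
    (hn : 0 < Fintype.card V)
    (hdvd : genChrom G ∣ Fintype.card V)
    (hreg : G.IsRegularOfDegree (Fintype.card V * (genChrom G - 1) / genChrom G)) :
    (genChrom G : ℝ) = (Fintype.card V : ℝ) / ((Fintype.card V : ℝ) - qmDeg G) := by
  obtain ⟨m, hm⟩ := hdvd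
  set r := genChrom G with hr
  have hr0 : 0 < r := by
    rcases Nat.eq_zero_or_pos r with h | h
    · rw [h] at hm; simp at hm; omega
    · exact h
  have hm0 : 0 < m := by
    by_contra h
    push_neg at h
    interval_cases m
    omega
  have hd : Fintype.card V * (r - 1) / r = m * (r - 1) := by
    rw [hm, Nat.mul_assoc, Nat.mul_div_cancel_left _ hr0]
  set d : ℕ := m * (r - 1) with hdd
  have hqm : qmDeg G = d := by
    unfold qmDeg
    have : ∀ v : V, (G.degree v : ℝ) ^ 2 = (d : ℝ) ^ 2 := by
      intro v; rw [hreg v, hd]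
    rw [Finset.sum_congr rfl (fun v _ => this v), Finset.sum_const, Finset.card_univ,
      nsmul_eq_mul]
    rw [mul_div_cancel_left₀ _ (Nat.cast_ne_zero.mpr hn.ne' : (Fintype.card V : ℝ) ≠ 0)]
    exact Real.sqrt_sq (by positivity)
  rw [hqm]
  have hnd : (Fintype.card V : ℝ) - d = m := by
    have h2 : d + m = Fintype.card V := by
      obtain ⟨k, hk⟩ := Nat.exists_eq_succ_of_ne_zero hr0.ne'
      rw [hdd, hm, hk]
      simp [Nat.succ_sub_one, Nat.succ_mul, Nat.mul_succ]
      ring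
    rw [← h2]; push_cast; ring
  rw [hnd, hm]
  push_cast
  rw [mul_div_assoc, div_self (by exact_mod_cast hm0.ne'), mul_one]
end

section
/- Every simple graph G admits a partition of its vertex set into ω(G) δ-sets, hence φ(G) ≤ ω(G). -/
open Finset

/-!
Greedy peeling of a maximum-degree vertex. In `R`, pick `h` of maximum degree. Its non-neighbours
in `R` avoid `N(h)`, so they number at most `n - deg h`, while each has degree at most `deg h`:
they form a δ-set. Recurse on the neighbours of `h` in `R`; every vertex coloured at depth `j`
lies in a clique of size `j + 1` built from the peeled vertices, so at most `ω(G)` colours are used.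
-/

namespace SimpleGraph

variable {V : Type*} [Fintype V] [DecidableEq V] (G : SimpleGraph V) [DecidableRel G.Adj]

lemma isDeltaSet_of_not_adj_of_degree_le {S : Finset V} (h : V) (hS : ∀ v ∈ S, ¬G.Adj h v)
    (hdeg : ∀ v ∈ S, G.degree v ≤ G.degree h) : IsDeltaSet G S := by
  have hcard : S.card ≤ Fintype.card V - G.degree h := by
    rw [← card_neighborFinset_eq_degree, ← card_compl]
    exact card_le_card fun v hv => mem_compl.2 fun hN => hS v hv ((mem_neighborFinset G h v).1 hN)
  intro v hv
  have := G.degree_lt_card_verts h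
  have := hdeg v hv
  omega

theorem exists_deltaSet_coloring_with_cliques (R : Finset V) :
    ∃ f : V → ℕ, (∀ i, IsDeltaSet G (R.filter (f · = i))) ∧
      ∀ v ∈ R, ∃ C ⊆ R, G.IsClique (C : Set V) ∧ C.card = f v + 1 := by
  induction R using Finset.strongInduction with
  | H R ih =>
  rcases R.eq_empty_or_nonempty with rfl | hne
  · exact ⟨fun _ => 0, fun i v hv => by simp at hv, by simp⟩
  obtain ⟨h, hR, hmax⟩ := R.exists_max_image (G.degree ·) hne
  have hsub : R.filter (G.Adj h) ⊂ R :=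
    filter_ssubset.2 ⟨h, hR, G.loopless.irrefl h⟩
  obtain ⟨f, hδ, hclique⟩ := ih _ hsub
  refine ⟨fun v => if G.Adj h v then f v + 1 else 0, fun i => ?_, fun v hv => ?_⟩
  · cases i with
    | zero =>
      refine G.isDeltaSet_of_not_adj_of_degree_le h (fun v hv hadj => ?_)
        fun v hv => hmax v (mem_filter.1 hv).1
      simp [hadj] at hv
    | succ i =>
      have hclass : R.filter (fun v => (if G.Adj h v then f v + 1 else 0) = i + 1) =
          (R.filter (G.Adj h)).filter (f · = i) := by
        ext v
        by_cases hadj : G.Adj h v <;> simp [hadj]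
      rw [hclass]
      exact hδ i
  · by_cases hadj : G.Adj h v
    · obtain ⟨C, hCR, hC, hCcard⟩ := hclique v (mem_filter.2 ⟨hv, hadj⟩)
      have hhC : h ∉ C := fun hh => G.loopless.irrefl h (mem_filter.1 (hCR hh)).2
      refine ⟨insert h C, insert_subset hR (hCR.trans hsub.subset), ?_, ?_⟩
      · rw [coe_insert]
        exact hC.insert fun c hc _ => (mem_filter.1 (hCR hc)).2
      · simp [card_insert_of_notMem hhC, hCcard, hadj]
    · exact ⟨{v}, singleton_subset_iff.2 hv, by simp, by simp [hadj]⟩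

end SimpleGraph

theorem stmt16 {V : Type*} [Fintype V] [DecidableEq V] (G : SimpleGraph V) [DecidableRel G.Adj] :
    (∃ f : V → Fin G.cliqueNum,
      ∀ i, IsDeltaSet G (Finset.univ.filter fun v => f v = i)) ∧
    genChrom G ≤ G.cliqueNum := by
  obtain ⟨f, hδ, hclique⟩ := G.exists_deltaSet_coloring_with_cliques univ
  have hf : ∀ v, f v < G.cliqueNum := fun v => by
    obtain ⟨C, -, hC, hCcard⟩ := hclique v (mem_univ v)
    have : C.card ≤ G.cliqueNum := hC.card_le_cliqueNum
    omega
  have hpart : ∃ g : V → Fin G.cliqueNum,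
      ∀ i, IsDeltaSet G (Finset.univ.filter fun v => g v = i) :=
    ⟨fun v => ⟨f v, hf v⟩, fun i => by simpa only [Fin.ext_iff] using hδ i⟩
  exact ⟨hpart, Nat.sInf_le hpart⟩
end
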